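/- If x̂ ∈ ℝ^d lies in D_κ, then the rank-one matrices satisfy ‖x̂x̂* − x̂_{{j}}x̂_{{j}}*‖_{HS} ≤ √2 ‖x̂‖₂ r_{j+1}(x̂) · 1/√(1−κ²) ≤ √2 ‖x̂‖₂ r_j(x̂) · κ/√(1−κ²). -/

import Mathlib

/-
Write `z = x̂ - x̂_{j}`, the tail of `x̂`. Entrywise, `x̂x̂* - x̂_{j}x̂_{j}*` has `(i,k)` entry of
square at most `z_i² x̂_k² + x̂_i² z_k²`, so its Hilbert–Schmidt norm is at most `√2 ‖x̂‖ ‖z‖`.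
The decay condition makes the sorted entries beyond `j` dominated by the geometric sequence
`κ^m r_{j+1}(x̂)`, hence `‖z‖² ≤ r_{j+1}(x̂)² / (1 - κ²)`; finally `r_{j+1}(x̂) ≤ κ r_j(x̂)`.
-/

noncomputable section
open scoped BigOperators

/-- Best `j`-sparse approximation of `x` (given a sorting permutation `σ`). -/
def trunc {d : ℕ} (σ : Equiv.Perm (Fin d)) (j : ℕ) (x : EuclideanSpace ℝ (Fin d)) :
    EuclideanSpace ℝ (Fin d) :=
  WithLp.toLp 2 fun i => if (σ.symm i : ℕ) < j then x i else 0

/-- The outer product `x y*` as a matrix. -/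
def outer {d : ℕ} (x y : EuclideanSpace ℝ (Fin d)) : Matrix (Fin d) (Fin d) ℝ :=
  Matrix.of fun i j => x i * y j

/-- The Hilbert–Schmidt (Frobenius) norm of a matrix. -/
def hsNorm {d : ℕ} (M : Matrix (Fin d) (Fin d) ℝ) : ℝ :=
  Real.sqrt (∑ i, ∑ j, (M i j) ^ 2)

open Finset

lemma sum_Ico_le_div_one_sub_of_le_mul {u : ℕ → ℝ} {q : ℝ} (hq0 : 0 ≤ q) (hq1 : q < 1)
    (hu : ∀ n, u (n + 1) ≤ q * u n) (j N : ℕ) (hj : 0 ≤ u j) :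
    ∑ n ∈ Ico j N, u n ≤ u j / (1 - q) :=
  calc ∑ n ∈ Ico j N, u n = ∑ k ∈ range (N - j), u (j + k) := sum_Ico_eq_sum_range u j N
    _ ≤ ∑ k ∈ range (N - j), q ^ k * u j :=
        sum_le_sum fun k _ => le_geom (u := fun k => u (j + k)) hq0 k fun i _ => hu (j + i)
    _ = (∑ k ∈ Ico 0 (N - j), q ^ k) * u j := by rw [← sum_mul, range_eq_Ico]
    _ ≤ q ^ 0 / (1 - q) * u j := by gcongr; exact geom_sum_Ico_le_of_lt_one hq0 hq1
    _ = u j / (1 - q) := by ring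

lemma sq_mul_sub_mul_le {a b a' b' : ℝ} (ha : a' = a ∨ a' = 0) (hb : b' = b ∨ b' = 0) :
    (a * b - a' * b') ^ 2 ≤ (a - a') ^ 2 * b ^ 2 + a ^ 2 * (b - b') ^ 2 := by
  rcases ha with ha | ha <;> rcases hb with hb | hb <;> rw [ha, hb] <;>
    nlinarith [sq_nonneg (a * b)]

variable {d : ℕ}

lemma hsNorm_outer_sub_outer_le {x y : EuclideanSpace ℝ (Fin d)}
    (hy : ∀ i, y i = x i ∨ y i = 0) :
    hsNorm (outer x x - outer y y) ≤ √2 * ‖x‖ * ‖x - y‖ := by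
  rw [hsNorm, Real.sqrt_le_left (by positivity), mul_pow, mul_pow, Real.sq_sqrt zero_le_two,
    EuclideanSpace.real_norm_sq_eq x, EuclideanSpace.real_norm_sq_eq (x - y)]
  calc ∑ i, ∑ k, ((outer x x - outer y y) i k) ^ 2
      ≤ ∑ i, ∑ k, ((x i - y i) ^ 2 * x k ^ 2 + x i ^ 2 * (x k - y k) ^ 2) :=
        sum_le_sum fun i _ => sum_le_sum fun k _ => sq_mul_sub_mul_le (hy i) (hy k)
    _ = 2 * (∑ i, x i ^ 2) * ∑ i, (x - y) i ^ 2 := by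
        simp only [PiLp.sub_apply, sum_add_distrib, ← sum_mul_sum]; ring

lemma trunc_apply_eq_or_eq_zero (σ : Equiv.Perm (Fin d)) (j : ℕ) (x : EuclideanSpace ℝ (Fin d))
    (i : Fin d) : trunc σ j x i = x i ∨ trunc σ j x i = 0 := by
  simp only [trunc, WithLp.ofLp_toLp]
  split_ifs <;> simp

/-- `sortedAbs σ x n` is the paper's `r_{n+1}(x)`, extended by `0` for `n ≥ d`. -/
def sortedAbs (σ : Equiv.Perm (Fin d)) (x : EuclideanSpace ℝ (Fin d)) (n : ℕ) : ℝ :=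
  if h : n < d then |x (σ ⟨n, h⟩)| else 0

section sortedAbs
variable {σ : Equiv.Perm (Fin d)} {x : EuclideanSpace ℝ (Fin d)}

lemma sortedAbs_of_lt {n : ℕ} (h : n < d) : sortedAbs σ x n = |x (σ ⟨n, h⟩)| := dif_pos h

lemma sortedAbs_nonneg (n : ℕ) : 0 ≤ sortedAbs σ x n := by
  unfold sortedAbs; split_ifs <;> positivity

lemma sortedAbs_succ_le {κ : ℝ} (hκ : 0 ≤ κ)
    (hdecay : ∀ i : Fin d, ∀ h : (i : ℕ) + 1 < d, |x (σ ⟨(i : ℕ) + 1, h⟩)| ≤ κ * |x (σ i)|)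
    (n : ℕ) : sortedAbs σ x (n + 1) ≤ κ * sortedAbs σ x n := by
  by_cases h : n + 1 < d
  · rw [sortedAbs_of_lt h, sortedAbs_of_lt (by omega)]
    exact hdecay ⟨n, _⟩ h
  · rw [sortedAbs, dif_neg h]
    exact mul_nonneg hκ (sortedAbs_nonneg n)

lemma norm_sub_trunc_sq (j : ℕ) :
    ‖x - trunc σ j x‖ ^ 2 = ∑ n ∈ Ico j d, sortedAbs σ x n ^ 2 := by
  rw [EuclideanSpace.real_norm_sq_eq, ← Equiv.sum_comp σ]
  simp only [trunc, PiLp.sub_apply, Equiv.symm_apply_apply]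
  calc _ = ∑ m : Fin d, if j ≤ (m : ℕ) then sortedAbs σ x m ^ 2 else 0 := by
        refine sum_congr rfl fun m _ => ?_
        rw [sortedAbs_of_lt m.2, sq_abs]
        split_ifs <;> first | omega | simp
    _ = ∑ n ∈ range d, if j ≤ n then sortedAbs σ x n ^ 2 else 0 :=
        Fin.sum_univ_eq_sum_range (fun n => if j ≤ n then sortedAbs σ x n ^ 2 else 0) d
    _ = _ := by
        rw [← sum_filter]
        congr 1
        ext n
        simp only [mem_filter, mem_range, mem_Ico]
        omega

lemma norm_sub_trunc_le {κ : ℝ} (hκ0 : 0 ≤ κ) (hκ1 : κ < 1)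
    (hsucc : ∀ n, sortedAbs σ x (n + 1) ≤ κ * sortedAbs σ x n) (j : ℕ) :
    ‖x - trunc σ j x‖ ≤ sortedAbs σ x j / √(1 - κ ^ 2) := by
  have hsq : ‖x - trunc σ j x‖ ^ 2 ≤ sortedAbs σ x j ^ 2 / (1 - κ ^ 2) := by
    rw [norm_sub_trunc_sq]
    refine sum_Ico_le_div_one_sub_of_le_mul (sq_nonneg κ) (by nlinarith) (fun n => ?_) j d
      (sq_nonneg _)
    rw [← mul_pow]
    exact pow_le_pow_left₀ (sortedAbs_nonneg _) (hsucc n) 2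
  rw [← Real.sqrt_sq (sortedAbs_nonneg j), ← Real.sqrt_div' _ (by nlinarith)]
  exact Real.le_sqrt_of_sq_le hsq

end sortedAbs

theorem outer_sparse_approx_error_of_rapidly_decaying_general
    {d : ℕ} (κ : ℝ) (hκ0 : 0 < κ) (hκ1 : κ < 1)
    (xh : EuclideanSpace ℝ (Fin d)) (σ : Equiv.Perm (Fin d))
    (hdecay : ∀ i : Fin d, ∀ h : (i : ℕ) + 1 < d, |xh (σ ⟨(i : ℕ) + 1, h⟩)| ≤ κ * |xh (σ i)|)
    (j : ℕ) (hj1 : 1 ≤ j) (hjd : j < d) (hj1d : j - 1 < d) :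
    hsNorm (outer xh xh - outer (trunc σ j xh) (trunc σ j xh)) ≤
      Real.sqrt 2 * ‖xh‖ * |xh (σ ⟨j, hjd⟩)| * (1 / Real.sqrt (1 - κ ^ 2)) ∧
    Real.sqrt 2 * ‖xh‖ * |xh (σ ⟨j, hjd⟩)| * (1 / Real.sqrt (1 - κ ^ 2)) ≤
      Real.sqrt 2 * ‖xh‖ * |xh (σ ⟨j - 1, hj1d⟩)| * (κ / Real.sqrt (1 - κ ^ 2)) := by
  have hsucc := sortedAbs_succ_le hκ0.le hdecay
  have htail : ‖xh - trunc σ j xh‖ ≤ |xh (σ ⟨j, hjd⟩)| / √(1 - κ ^ 2) := by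
    simpa only [sortedAbs_of_lt hjd] using norm_sub_trunc_le hκ0.le hκ1 hsucc j
  have hstep : |xh (σ ⟨j, hjd⟩)| ≤ κ * |xh (σ ⟨j - 1, hj1d⟩)| := by
    have h := hsucc (j - 1)
    rwa [Nat.sub_add_cancel hj1, sortedAbs_of_lt hjd, sortedAbs_of_lt hj1d] at h
  constructor
  · calc hsNorm (outer xh xh - outer (trunc σ j xh) (trunc σ j xh))
        ≤ √2 * ‖xh‖ * ‖xh - trunc σ j xh‖ :=
          hsNorm_outer_sub_outer_le (trunc_apply_eq_or_eq_zero σ j xh)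
      _ ≤ _ := by rw [mul_one_div, mul_div_assoc]; gcongr
  · rw [mul_one_div, mul_div, mul_assoc (√2 * ‖xh‖), mul_comm _ κ]
    gcongr

/-- Lemma 3.7 of the paper: if `x̂ ∈ 𝒟_κ`, then
`‖x̂x̂* − x̂_{j}x̂_{j}*‖_HS ≤ √2‖x̂‖ r_{j+1}(x̂)/√(1−κ²) ≤ √2‖x̂‖ r_j(x̂) κ/√(1−κ²)`.
Here `σ` sorts `x̂` nonincreasingly in absolute value, `r_m(x̂) = |x̂ (σ (m-1))|`. -/
theorem outer_sparse_approx_error_of_rapidly_decaying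
    {d : ℕ} (κ : ℝ) (hκ0 : 0 < κ) (hκ1 : κ < 1)
    (xh : EuclideanSpace ℝ (Fin d)) (σ : Equiv.Perm (Fin d))
    (hsort : ∀ i j : Fin d, i ≤ j → |xh (σ j)| ≤ |xh (σ i)|)
    (hdecay : ∀ i : Fin d, ∀ h : (i : ℕ) + 1 < d, |xh (σ ⟨(i : ℕ) + 1, h⟩)| ≤ κ * |xh (σ i)|)
    (j : ℕ) (hj1 : 1 ≤ j) (hjd : j < d) (hj1d : j - 1 < d) :
    hsNorm (outer xh xh - outer (trunc σ j xh) (trunc σ j xh)) ≤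
      Real.sqrt 2 * ‖xh‖ * |xh (σ ⟨j, hjd⟩)| * (1 / Real.sqrt (1 - κ ^ 2)) ∧
    Real.sqrt 2 * ‖xh‖ * |xh (σ ⟨j, hjd⟩)| * (1 / Real.sqrt (1 - κ ^ 2)) ≤
      Real.sqrt 2 * ‖xh‖ * |xh (σ ⟨j - 1, hj1d⟩)| * (κ / Real.sqrt (1 - κ ^ 2)) :=
  outer_sparse_approx_error_of_rapidly_decaying_general κ hκ0 hκ1 xh σ hdecay j hj1 hjd hj1d
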